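/- arXiv:1610.01461 — 2 statements merged into one kernel-verified Lean document; each statement's English description precedes it below -/
import Mathlib

section
/- Let a_{ij} ≥ 0 (i,j ∈ {1,…,n}) with a_{ii} = 0, let L ∈ ℝ^{n×n} be the Laplacian matrix defined by l_{ii} = Σ_{j=1}^n a_{ij} and l_{ij} = −a_{ij} for i ≠ j, let 0 < m < n, and suppose a_{ij} = 0 for all i ∈ {m+1,…,n} and all j (so the last n−m rows of L vanish and L = [[L₁, L₂],[0, 0]] with L₁ ∈ ℝ^{m×m}, L₂ ∈ ℝ^{m×(n−m)}). Suppose that for every i ∈ {1,…,m} there exist j ∈ {m+1,…,n} and a finite sequence of indices j = l_0, l_1, …, l_k = i with a_{l_{r+1} l_r} > 0 for all r (a directed path from j to i). Then L₁ is a nonsingular M-matrix; in particular L₁ is invertible, its off-diagonal entries are nonpositive, and every eigenvalue of L₁ has positive real part. -/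
/-!
Extend a vector `v` with `L₁ *ᵥ v = 0` by zero on the leaders. The extension `y` satisfies
`∑ j, a i j * (y i - y j) = 0` at every follower `i`, so a positive maximum of `y` would spread
backwards along a directed path to a leader, where `y` vanishes. Hence `v ≤ 0`, likewise
`-v ≤ 0`, and `L₁` is invertible. Its rows satisfy `∑ j ≠ i, |L₁ i j| ≤ L₁ i i`, so by
Gershgorin every eigenvalue lies in a disc `‖μ - c‖ ≤ c`, which meets the closed left half-plane
only at `0`, and `0` is not an eigenvalue.
-/

open Finset Function Relation
open scoped Matrix

theorem Complex.re_pos_of_norm_sub_ofReal_le {μ : ℂ} {c : ℝ} (h : ‖μ - c‖ ≤ c) (hμ : μ ≠ 0) :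
    0 < μ.re := by
  have hc : 0 ≤ c := (norm_nonneg _).trans h
  have hsq : (μ.re - c) ^ 2 + μ.im ^ 2 ≤ c ^ 2 := by
    have := pow_le_pow_left₀ (norm_nonneg _) h 2
    rwa [Complex.sq_norm, Complex.normSq_apply, Complex.sub_re, Complex.sub_im,
      Complex.ofReal_re, Complex.ofReal_im, sub_zero, ← sq, ← sq] at this
  by_contra! hre
  have hre0 : μ.re = 0 := by nlinarith [sq_nonneg μ.im, sq_nonneg μ.re]
  have him0 : μ.im = 0 := by nlinarith [sq_nonneg μ.im, sq_nonneg μ.re]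
  exact hμ (Complex.ext hre0 him0)

namespace Matrix

variable {ι κ : Type*} [Fintype ι] [Fintype κ]

theorem re_pos_of_mem_spectrum_map_ofReal [DecidableEq ι] {A : Matrix ι ι ℝ} (hA : IsUnit A)
    (hdom : ∀ k, ∑ j ∈ univ.erase k, |A k j| ≤ A k k) {μ : ℂ}
    (hμ : μ ∈ spectrum ℂ (A.map ((↑) : ℝ → ℂ))) : 0 < μ.re := by
  have hμ0 : μ ≠ 0 := by
    rintro rfl
    exact (spectrum.zero_mem_iff ℂ).mp hμ (hA.map Complex.ofRealHom.mapMatrix)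
  have heig : Module.End.HasEigenvalue (toLin' (A.map ((↑) : ℝ → ℂ))) μ := by
    rwa [Module.End.hasEigenvalue_iff_mem_spectrum, spectrum_toLin']
  obtain ⟨k, hk⟩ := eigenvalue_mem_ball heig
  refine Complex.re_pos_of_norm_sub_ofReal_le (c := A k k) ?_ hμ0
  calc ‖μ - A k k‖ ≤ ∑ j ∈ univ.erase k, ‖(A k j : ℂ)‖ := mem_closedBall_iff_norm.mp hk
    _ = ∑ j ∈ univ.erase k, |A k j| := by simp only [Complex.norm_real, Real.norm_eq_abs]
    _ ≤ A k k := hdom k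

theorem sum_abs_submatrix_offDiag_le [DecidableEq ι] [DecidableEq κ] {A : Matrix ι ι ℝ}
    (hdom : ∀ i, ∑ j ∈ univ.erase i, |A i j| ≤ A i i) {e : κ → ι} (he : Injective e) (k : κ) :
    ∑ j ∈ univ.erase k, |A.submatrix e e k j| ≤ A.submatrix e e k k := by
  calc ∑ j ∈ univ.erase k, |A (e k) (e j)|
      = ∑ i ∈ (univ.erase k).map ⟨e, he⟩, |A (e k) i| := by rw [sum_map]; rfl
    _ ≤ ∑ i ∈ univ.erase (e k), |A (e k) i| :=
        sum_le_sum_of_subset_of_nonneg (by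
          simp only [subset_iff, mem_map, mem_erase, mem_univ, and_true]
          rintro _ ⟨j, hj, rfl⟩
          exact he.ne hj)
          (fun _ _ _ => abs_nonneg _)
    _ ≤ A (e k) (e k) := hdom (e k)

theorem isUnit_of_forall_mulVec_eq_zero_nonpos [DecidableEq ι] {A : Matrix ι ι ℝ}
    (h : ∀ v, A *ᵥ v = 0 → v ≤ 0) : IsUnit A := by
  refine mulVec_injective_iff_isUnit.mp <|
    (injective_iff_map_eq_zero A.mulVecLin).mpr fun v (hv : A *ᵥ v = 0) => ?_
  exact le_antisymm (h v hv) (neg_nonpos.mp (h (-v) (by rw [mulVec_neg, hv, neg_zero])))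

theorem mulVec_extend_zero {R : Type*} [CommSemiring R] {e : κ → ι} (he : Injective e)
    (A : Matrix ι ι R) (v : κ → R) : A *ᵥ extend e v 0 = A.submatrix id e *ᵥ v := by
  ext i
  refine (Fintype.sum_of_injective e he _ _ (fun j hj => ?_) (fun k => ?_)).symm
  · rw [extend_apply' _ _ _ (by simpa using hj), Pi.zero_apply, mul_zero]
  · rw [he.extend_apply]; rfl

end Matrix

theorem Relation.reflTransGen_of_forall_lt {α : Type*} {R : α → α → Prop} {l : ℕ → α} {k : ℕ}
    (h : ∀ r < k, R (l r) (l (r + 1))) : ReflTransGen R (l 0) (l k) :=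
  (reflTransGen_of_succ_of_le (fun r s => R (l r) (l s)) (fun r hr => h r hr.2)
    k.zero_le).lift l fun _ _ => id

section Laplacian

variable {ι κ : Type*} [Fintype ι]

def laplacian [DecidableEq ι] (a : ι → ι → ℝ) : Matrix ι ι ℝ :=
  Matrix.of fun i j => if i = j then ∑ k, a i k else -a i j

theorem laplacian_mulVec_apply [DecidableEq ι] {a : ι → ι → ℝ} (ha_diag : ∀ i, a i i = 0)
    (y : ι → ℝ) (i : ι) : (laplacian a *ᵥ y) i = ∑ j, a i j * (y i - y j) := by
  have hrow : ∀ j, laplacian a i j * y j =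
      (if i = j then (∑ k, a i k) * y i else 0) - a i j * y j := by
    intro j
    rcases eq_or_ne i j with rfl | hij
    · simp [laplacian, ha_diag]
    · simp [laplacian, hij]
  simp only [Matrix.mulVec, dotProduct, hrow, sum_sub_distrib, sum_ite_eq, mem_univ, if_true,
    sum_mul, mul_sub]

theorem laplacian_sum_abs_offDiag_le [DecidableEq ι] {a : ι → ι → ℝ} (ha : ∀ i j, 0 ≤ a i j)
    (i : ι) : ∑ j ∈ univ.erase i, |laplacian a i j| ≤ laplacian a i i := by
  calc ∑ j ∈ univ.erase i, |laplacian a i j| = ∑ j ∈ univ.erase i, a i j :=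
        sum_congr rfl fun j hj => by
          simp [laplacian, (ne_of_mem_erase hj).symm, abs_of_nonneg (ha i j)]
    _ ≤ ∑ j, a i j := sum_le_sum_of_subset_of_nonneg (subset_univ _) fun j _ _ => ha i j
    _ = laplacian a i i := by simp [laplacian]

theorem eq_of_isMax_of_sum_mul_sub_eq_zero {a : ι → ι → ℝ} (ha : ∀ i j, 0 ≤ a i j)
    {y : ι → ℝ} {i j : ι} (hmax : ∀ t, y t ≤ y i) (hi : ∑ t, a i t * (y i - y t) = 0)
    (hij : 0 < a i j) : y j = y i := by
  have hterm := (sum_eq_zero_iff_of_nonneg fun t _ => mul_nonneg (ha i t)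
    (sub_nonneg.mpr (hmax t))).mp hi j (mem_univ j)
  linarith [(mul_eq_zero.mp hterm).resolve_left hij.ne']

theorem nonpos_of_sum_mul_sub_eq_zero {a : ι → ι → ℝ} (ha : ∀ i j, 0 ≤ a i j) {S : Set ι}
    {y : ι → ℝ} (hy_out : ∀ j ∉ S, y j = 0) (hy_in : ∀ i ∈ S, ∑ j, a i j * (y i - y j) = 0)
    (hreach : ∀ i ∈ S, ∃ j ∉ S, ReflTransGen (fun u v => 0 < a v u) j i) (i : ι) : y i ≤ 0 := by
  by_contra! hpos
  have : Nonempty ι := ⟨i⟩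
  obtain ⟨i₀, hmax⟩ := Finite.exists_max y
  have hM : 0 < y i₀ := hpos.trans_le (hmax i)
  have hS : ∀ t, y t = y i₀ → t ∈ S := fun t ht => by
    by_contra hts
    linarith [hy_out t hts]
  obtain ⟨j, hj, hpath⟩ := hreach i₀ (hS i₀ rfl)
  have hback : ∀ t, ReflTransGen (fun u v => 0 < a v u) j t → y t = y i₀ → y j = y i₀ := by
    intro t hjt
    induction hjt with
    | refl => exact id
    | tail _ hbc ih =>
      intro hc
      exact ih (hc ▸ eq_of_isMax_of_sum_mul_sub_eq_zero ha (hc ▸ hmax) (hy_in _ (hS _ hc)) hbc)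
  linarith [hy_out j hj, hback i₀ hpath rfl]

theorem isUnit_laplacian_submatrix [DecidableEq ι] [Fintype κ] [DecidableEq κ]
    {a : ι → ι → ℝ} (ha : ∀ i j, 0 ≤ a i j) (ha_diag : ∀ i, a i i = 0) {e : κ → ι}
    (he : Injective e)
    (hreach : ∀ k, ∃ j ∉ Set.range e, ReflTransGen (fun u v => 0 < a v u) j (e k)) :
    IsUnit ((laplacian a).submatrix e e) := by
  refine Matrix.isUnit_of_forall_mulVec_eq_zero_nonpos fun v hv k => ?_
  have hy := nonpos_of_sum_mul_sub_eq_zero ha (S := Set.range e) (y := extend e v 0)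
    (fun j hj => extend_apply' _ _ _ (by simpa using hj))
    (by
      rintro _ ⟨i, rfl⟩
      rw [← laplacian_mulVec_apply ha_diag, Matrix.mulVec_extend_zero he]
      exact congrFun hv i)
    (by rintro _ ⟨i, rfl⟩; exact hreach i) (e k)
  rwa [he.extend_apply] at hy

end Laplacian

theorem laplacian_block_nonsingular_Mmatrix_general (n m : ℕ) (hmn : m < n)
    (a : Fin n → Fin n → ℝ)
    (ha_nonneg : ∀ i j, 0 ≤ a i j)
    (ha_diag : ∀ i, a i i = 0)
    (L : Matrix (Fin n) (Fin n) ℝ)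
    (hL : ∀ i j, L i j = if i = j then ∑ k, a i k else -a i j)
    (L₁ : Matrix (Fin m) (Fin m) ℝ)
    (hL₁ : ∀ i j, L₁ i j = L (Fin.castLE hmn.le i) (Fin.castLE hmn.le j))
    (hpath : ∀ i : Fin n, (i : ℕ) < m → ∃ j : Fin n, m ≤ (j : ℕ) ∧
      ∃ (k : ℕ) (l : ℕ → Fin n), l 0 = j ∧ l k = i ∧
        ∀ r : ℕ, r < k → 0 < a (l (r + 1)) (l r)) :
    IsUnit L₁ ∧ (∀ i j : Fin m, i ≠ j → L₁ i j ≤ 0) ∧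
      (∀ μ ∈ spectrum ℂ (L₁.map (fun x : ℝ => (x : ℂ))), 0 < μ.re) := by
  set e := Fin.castLE hmn.le
  have he : Injective e := Fin.castLE_injective hmn.le
  have hL₁e : L₁ = (laplacian a).submatrix e e := Matrix.ext fun i j => (hL₁ i j).trans (hL _ _)
  have hreach : ∀ k, ∃ j ∉ Set.range e, ReflTransGen (fun u v => 0 < a v u) j (e k) := by
    intro k
    obtain ⟨j, hj, r, l, rfl, hlr, hedge⟩ := hpath (e k) k.isLt
    refine ⟨l 0, ?_, hlr ▸ reflTransGen_of_forall_lt hedge⟩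
    rintro ⟨t, ht⟩
    exact (Fin.val_eq_of_eq ht ▸ hj).not_gt t.isLt
  have hunit : IsUnit L₁ := hL₁e ▸ isUnit_laplacian_submatrix ha_nonneg ha_diag he hreach
  refine ⟨hunit, fun i j hij => ?_, fun μ => Matrix.re_pos_of_mem_spectrum_map_ofReal hunit ?_⟩
  · rw [hL₁, hL, if_neg (he.ne hij), neg_nonpos]
    exact ha_nonneg _ _
  · rw [hL₁e]
    exact Matrix.sum_abs_submatrix_offDiag_le (laplacian_sum_abs_offDiag_le ha_nonneg) he

/-- Lemma 1 of the paper: under the leader-follower structure and the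
directed-path connectivity assumption, the upper-left block `L₁` of the Laplacian is a
nonsingular M-matrix: it is invertible, has nonpositive off-diagonal entries, and all its
eigenvalues have positive real part. -/
theorem laplacian_block_nonsingular_Mmatrix (n m : ℕ) (hm : 0 < m) (hmn : m < n)
    (a : Fin n → Fin n → ℝ)
    (ha_nonneg : ∀ i j, 0 ≤ a i j)
    (ha_diag : ∀ i, a i i = 0)
    (ha_leader : ∀ i : Fin n, m ≤ (i : ℕ) → ∀ j, a i j = 0)
    (L : Matrix (Fin n) (Fin n) ℝ)
    (hL : ∀ i j, L i j = if i = j then ∑ k, a i k else -a i j)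
    (L₁ : Matrix (Fin m) (Fin m) ℝ)
    (hL₁ : ∀ i j, L₁ i j = L (Fin.castLE hmn.le i) (Fin.castLE hmn.le j))
    (hpath : ∀ i : Fin n, (i : ℕ) < m → ∃ j : Fin n, m ≤ (j : ℕ) ∧
      ∃ (k : ℕ) (l : ℕ → Fin n), l 0 = j ∧ l k = i ∧
        ∀ r : ℕ, r < k → 0 < a (l (r + 1)) (l r)) :
    IsUnit L₁ ∧ (∀ i j : Fin m, i ≠ j → L₁ i j ≤ 0) ∧
      (∀ μ ∈ spectrum ℂ (L₁.map (fun x : ℝ => (x : ℂ))), 0 < μ.re) :=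
  laplacian_block_nonsingular_Mmatrix_general n m hmn a ha_nonneg ha_diag L hL L₁ hL₁ hpath
end

section
/- Let A, B, E, S, C_e, D_e, F_e, Π, Γ, K be real matrices of compatible dimensions satisfying the regulator equations Π S = A Π + B Γ + E and 0 = C_e Π + D_e Γ + F_e. Let x, x̂, υ, υ̂, η be differentiable vector-valued functions on [0,∞) with υ'(t) = S υ(t), x'(t) = A x(t) + B u(t) + E υ(t), and υ̂'(t) = S υ̂(t) + η(t), where u(t) = K(x̂(t) − Π υ̂(t)) + Γ υ̂(t). Define ε = x − Π υ̂, x̃ = x̂ − x, υ̃ = υ̂ − υ, and e(t) = C_e x(t) + D_e u(t) + F_e υ(t). Then for all t ≥ 0: (i) e = (C_e + D_e K) ε + D_e K x̃ − F_e υ̃, and (ii) ε'(t) = (A + B K) ε(t) + B K x̃(t) − E υ̃(t) − Π η(t). -/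
open scoped Matrix

/-!
Substituting the feedback law `u = K (x̂ - Π υ̂) + Γ υ̂` and writing `x̂ = x + x̃`, `υ̂ = υ + υ̃`,
both identities are linear rearrangements: the regulator equations are exactly what absorbs
the terms in `Π υ̂`, namely `C_e Π + D_e Γ = -F_e` in the regulated error and
`Π S - A Π - B Γ = E` in `ε' = x' - Π υ̂'`.
-/

theorem HasDerivAt.matrix_mulVec {𝕜 : Type*} [NontriviallyNormedField 𝕜] [CompleteSpace 𝕜]
    {m n : Type*} [Fintype m] [Fintype n] (M : Matrix m n 𝕜) {f : 𝕜 → n → 𝕜} {f' : n → 𝕜} {t : 𝕜}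
    (hf : HasDerivAt f f' t) : HasDerivAt (fun τ => M *ᵥ f τ) (M *ᵥ f') t :=
  (Matrix.mulVecLin M).toContinuousLinearMap.hasFDerivAt.comp_hasDerivAt t hf

section RegulatorEquations

variable {R : Type*} [CommRing R] {n m q p : Type*} [Fintype n] [Fintype m] [Fintype q]

theorem regulated_error_eq_of_regulator_eq {Ce : Matrix p n R} {De : Matrix p m R}
    {Fe : Matrix p q R} {P : Matrix n q R} {Γ : Matrix m q R} (K : Matrix m n R)
    (hreg : 0 = Ce * P + De * Γ + Fe) (x xh : n → R) (υ υh : q → R) :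
    Ce *ᵥ x + De *ᵥ (K *ᵥ (xh - P *ᵥ υh) + Γ *ᵥ υh) + Fe *ᵥ υ =
      (Ce + De * K) *ᵥ (x - P *ᵥ υh) + (De * K) *ᵥ (xh - x) - Fe *ᵥ (υh - υ) := by
  have hP : Ce *ᵥ (P *ᵥ υh) = -(De *ᵥ (Γ *ᵥ υh) + Fe *ᵥ υh) := by
    rw [eq_neg_iff_add_eq_zero, Matrix.mulVec_mulVec, Matrix.mulVec_mulVec, ← add_assoc,
      ← Matrix.add_mulVec, ← Matrix.add_mulVec, ← hreg, Matrix.zero_mulVec]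
  simp only [Matrix.mulVec_add, Matrix.mulVec_sub, Matrix.add_mulVec, ← Matrix.mulVec_mulVec, hP]
  abel

theorem tracking_error_deriv_eq_of_regulator_eq {A : Matrix n n R} {B : Matrix n m R}
    {E : Matrix n q R} {S : Matrix q q R} {P : Matrix n q R} {Γ : Matrix m q R}
    (K : Matrix m n R) (hreg : P * S = A * P + B * Γ + E) (x xh : n → R) (υ υh η : q → R) :
    A *ᵥ x + B *ᵥ (K *ᵥ (xh - P *ᵥ υh) + Γ *ᵥ υh) + E *ᵥ υ - P *ᵥ (S *ᵥ υh + η) =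
      (A + B * K) *ᵥ (x - P *ᵥ υh) + (B * K) *ᵥ (xh - x) - E *ᵥ (υh - υ) - P *ᵥ η := by
  have hP : P *ᵥ (S *ᵥ υh) = A *ᵥ (P *ᵥ υh) + B *ᵥ (Γ *ᵥ υh) + E *ᵥ υh := by
    rw [Matrix.mulVec_mulVec, hreg, Matrix.add_mulVec, Matrix.add_mulVec,
      ← Matrix.mulVec_mulVec, ← Matrix.mulVec_mulVec]
  simp only [Matrix.mulVec_add, Matrix.mulVec_sub, Matrix.add_mulVec, ← Matrix.mulVec_mulVec, hP]
  abel

end RegulatorEquations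

theorem regulator_error_identities_general
    {Nx Nu q pe : ℕ}
    (A : Matrix (Fin Nx) (Fin Nx) ℝ) (B : Matrix (Fin Nx) (Fin Nu) ℝ)
    (E : Matrix (Fin Nx) (Fin q) ℝ) (S : Matrix (Fin q) (Fin q) ℝ)
    (Ce : Matrix (Fin pe) (Fin Nx) ℝ) (De : Matrix (Fin pe) (Fin Nu) ℝ)
    (Fe : Matrix (Fin pe) (Fin q) ℝ)
    (Pmat : Matrix (Fin Nx) (Fin q) ℝ) (Γ : Matrix (Fin Nu) (Fin q) ℝ)
    (K : Matrix (Fin Nu) (Fin Nx) ℝ)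
    (hreg1 : Pmat * S = A * Pmat + B * Γ + E)
    (hreg2 : 0 = Ce * Pmat + De * Γ + Fe)
    (x xh : ℝ → Fin Nx → ℝ) (υ υh η : ℝ → Fin q → ℝ) (u : ℝ → Fin Nu → ℝ)
    (hu : ∀ t : ℝ, u t = K.mulVec (xh t - Pmat.mulVec (υh t)) + Γ.mulVec (υh t))
    (hx : ∀ t : ℝ, 0 ≤ t →
      HasDerivAt x (A.mulVec (x t) + B.mulVec (u t) + E.mulVec (υ t)) t)
    (hυh : ∀ t : ℝ, 0 ≤ t → HasDerivAt υh (S.mulVec (υh t) + η t) t) :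
    (∀ t : ℝ, 0 ≤ t →
      Ce.mulVec (x t) + De.mulVec (u t) + Fe.mulVec (υ t) =
        (Ce + De * K).mulVec (x t - Pmat.mulVec (υh t)) +
          (De * K).mulVec (xh t - x t) - Fe.mulVec (υh t - υ t)) ∧
    (∀ t : ℝ, 0 ≤ t →
      HasDerivAt (fun τ => x τ - Pmat.mulVec (υh τ))
        ((A + B * K).mulVec (x t - Pmat.mulVec (υh t)) + (B * K).mulVec (xh t - x t)
          - E.mulVec (υh t - υ t) - Pmat.mulVec (η t)) t) := by
  refine ⟨fun t _ => ?_, fun t ht => ?_⟩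
  · rw [hu t]
    exact regulated_error_eq_of_regulator_eq K hreg2 _ _ _ _
  · rw [← tracking_error_deriv_eq_of_regulator_eq K hreg1, ← hu t]
    exact (hx t ht).sub ((hυh t ht).matrix_mulVec Pmat)

/-- under the regulator equations, the regulated error and the tracking
error `ε = x - Π υ̂` satisfy the closed-loop identities (13) and (14) of the paper. -/
theorem regulator_error_identities
    {Nx Nu q pe : ℕ}
    (A : Matrix (Fin Nx) (Fin Nx) ℝ) (B : Matrix (Fin Nx) (Fin Nu) ℝ)
    (E : Matrix (Fin Nx) (Fin q) ℝ) (S : Matrix (Fin q) (Fin q) ℝ)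
    (Ce : Matrix (Fin pe) (Fin Nx) ℝ) (De : Matrix (Fin pe) (Fin Nu) ℝ)
    (Fe : Matrix (Fin pe) (Fin q) ℝ)
    (Pmat : Matrix (Fin Nx) (Fin q) ℝ) (Γ : Matrix (Fin Nu) (Fin q) ℝ)
    (K : Matrix (Fin Nu) (Fin Nx) ℝ)
    (hreg1 : Pmat * S = A * Pmat + B * Γ + E)
    (hreg2 : 0 = Ce * Pmat + De * Γ + Fe)
    (x xh : ℝ → Fin Nx → ℝ) (υ υh η : ℝ → Fin q → ℝ) (u : ℝ → Fin Nu → ℝ)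
    (hu : ∀ t : ℝ, u t = K.mulVec (xh t - Pmat.mulVec (υh t)) + Γ.mulVec (υh t))
    (hυ : ∀ t : ℝ, 0 ≤ t → HasDerivAt υ (S.mulVec (υ t)) t)
    (hx : ∀ t : ℝ, 0 ≤ t →
      HasDerivAt x (A.mulVec (x t) + B.mulVec (u t) + E.mulVec (υ t)) t)
    (hυh : ∀ t : ℝ, 0 ≤ t → HasDerivAt υh (S.mulVec (υh t) + η t) t) :
    (∀ t : ℝ, 0 ≤ t →
      Ce.mulVec (x t) + De.mulVec (u t) + Fe.mulVec (υ t) =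
        (Ce + De * K).mulVec (x t - Pmat.mulVec (υh t)) +
          (De * K).mulVec (xh t - x t) - Fe.mulVec (υh t - υ t)) ∧
    (∀ t : ℝ, 0 ≤ t →
      HasDerivAt (fun τ => x τ - Pmat.mulVec (υh τ))
        ((A + B * K).mulVec (x t - Pmat.mulVec (υh t)) + (B * K).mulVec (xh t - x t)
          - E.mulVec (υh t - υ t) - Pmat.mulVec (η t)) t) :=
  regulator_error_identities_general A B E S Ce De Fe Pmat Γ K hreg1 hreg2 x xh υ υh η u hu hx hυh
end
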